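/- arXiv:2503.16341 — 8 statements merged into one kernel-verified Lean document; each statement's English description precedes it below -/
import Mathlib

section
/- Let H and K be complex inner product spaces with dim(H) ≥ 2, and let A : H → K be a non-zero additive mapping preserving Euclidean orthogonality. Then there exist a positive real number γ and a real-linear isometry T : H → K such that A = γ T. In particular, A is real-linear and continuous. -/
open scoped ComplexInnerProductSpace

/-!
For orthogonal `x`, `y` of equal norm, `l • x + y` is orthogonal to `m • x - (conj l * m) • y`,
so `⟪A (l • x), A (m • x)⟫ = ⟪A y, A ((conj l * m) • y)⟫`. Applied twice to an orthonormal pair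
`e`, `f`, this shows that `⟪A (l • e), A (m • e)⟫ = g (conj l * m)` for the additive map
`g b = ⟪A e, A (b • e)⟫`. Hence `‖A (a • e)‖ ^ 2 = re g (‖a‖ ^ 2)`, and `re g` is additive and
nonnegative on `[0, ∞)`, so `re g t = c * t`. Writing `z = ⟪e, z⟫ • e + w` with `w ⊥ e` and
comparing `w` with `‖w‖ • e` gives `‖A z‖ ^ 2 = c * ‖z‖ ^ 2`. An additive map scaling all norms
by `γ > 0` is Lipschitz, hence `ℝ`-linear, and `γ⁻¹ • A` is the isometry.
-/

theorem AddMonoidHom.apply_eq_mul_of_map_nonneg (k : ℝ →+ ℝ) (hk : ∀ t, 0 ≤ t → 0 ≤ k t)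
    (t : ℝ) : k t = t * k 1 := by
  have hmono : Monotone k := (monotone_iff_map_nonneg k).2 hk
  have hrat (q : ℚ) : k q = q * k 1 := by simpa using map_ratCast_smul k ℝ ℝ q 1
  have hbound (x : ℝ) : ‖k x‖ ≤ 2 * k 1 * ‖x‖ := by
    rcases eq_or_ne x 0 with rfl | hx
    · simp
    obtain ⟨q, hxq, hq⟩ := exists_rat_btwn (lt_two_mul_self (abs_pos.2 hx))
    have hupper : k x ≤ k q := hmono ((le_abs_self x).trans hxq.le)
    have hlower : k (-q) ≤ k x := hmono (neg_le.1 ((neg_le_abs x).trans hxq.le))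
    rw [map_neg] at hlower
    rw [Real.norm_eq_abs, Real.norm_eq_abs, abs_le]
    constructor <;> nlinarith [hrat q, hk 1 zero_le_one]
  simpa using map_real_smul k (AddMonoidHomClass.continuous_of_bound k _ hbound) t 1

theorem exists_orthonormal_pair_of_two_le_rank {H : Type*} [NormedAddCommGroup H]
    [InnerProductSpace ℂ H] (hdim : 2 ≤ Module.rank ℂ H) :
    ∃ e f : H, ‖e‖ = 1 ∧ ‖f‖ = 1 ∧ ⟪e, f⟫ = 0 := by
  obtain ⟨v, hv⟩ := Module.le_rank_iff.1 hdim
  have hu := InnerProductSpace.gramSchmidtNormed_orthonormal hv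
  exact ⟨_, _, hu.1 0, hu.1 1, hu.2 (by decide)⟩

theorem AddMonoidHom.exists_linearIsometry_of_norm_map_eq {E F : Type*}
    [NormedAddCommGroup E] [NormedSpace ℝ E] [NormedAddCommGroup F] [NormedSpace ℝ F]
    (A : E →+ F) {γ : ℝ} (hγ : 0 < γ) (hA : ∀ x, ‖A x‖ = γ * ‖x‖) :
    ∃ T : E →ₗᵢ[ℝ] F, ∀ x, A x = γ • T x := by
  have hcont : Continuous A := AddMonoidHomClass.continuous_of_bound A γ (fun x => (hA x).le)
  refine ⟨⟨γ⁻¹ • (A.toRealLinearMap hcont).toLinearMap, fun x => ?_⟩, fun x => ?_⟩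
  · simp [norm_smul, hA, abs_of_pos hγ, hγ.ne']
  · simp [smul_smul, hγ.ne']

section

variable {H K : Type*} [NormedAddCommGroup H] [InnerProductSpace ℂ H]
  [NormedAddCommGroup K] [InnerProductSpace ℂ K]

def PreservesOrthogonality (A : H → K) : Prop :=
  ∀ x y : H, ⟪x, y⟫ = 0 → ⟪A x, A y⟫ = 0

namespace PreservesOrthogonality

variable {A : H →+ K}

theorem inner_map_smul_map_smul_eq (hA : PreservesOrthogonality A) {x y : H}
    (hxy : ⟪x, y⟫ = 0) (hn : ‖x‖ = ‖y‖) (l m : ℂ) :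
    ⟪A (l • x), A (m • x)⟫ = ⟪A y, A ((starRingEnd ℂ l * m) • y)⟫ := by
  have hyx : ⟪y, x⟫ = 0 := inner_eq_zero_symm.1 hxy
  have horth : ⟪l • x + y, m • x - (starRingEnd ℂ l * m) • y⟫ = 0 := by
    simp only [inner_add_left, inner_sub_right, inner_smul_left, inner_smul_right,
      inner_self_eq_norm_sq_to_K, hxy, hyx, hn]
    ring
  have hcross₁ : ⟪A (l • x), A ((starRingEnd ℂ l * m) • y)⟫ = 0 :=
    hA _ _ (by rw [inner_smul_left, inner_smul_right, hxy, mul_zero, mul_zero])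
  have hcross₂ : ⟪A y, A (m • x)⟫ = 0 := hA _ _ (by rw [inner_smul_right, hyx, mul_zero])
  have h := hA _ _ horth
  rw [map_add, map_sub, inner_add_left, inner_sub_right, inner_sub_right, hcross₁,
    hcross₂] at h
  linear_combination h

theorem inner_map_smul_map_smul_self_eq (hA : PreservesOrthogonality A) {e f : H}
    (hef : ⟪e, f⟫ = 0) (hn : ‖e‖ = ‖f‖) (l m : ℂ) :
    ⟪A (l • e), A (m • e)⟫ = ⟪A e, A ((starRingEnd ℂ l * m) • e)⟫ := by
  have h := hA.inner_map_smul_map_smul_eq (inner_eq_zero_symm.1 hef) hn.symm 1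
    (starRingEnd ℂ l * m)
  rw [one_smul, map_one, one_mul] at h
  rw [hA.inner_map_smul_map_smul_eq hef hn, h]

theorem norm_map_sq_eq_of_inner_eq_zero (hA : PreservesOrthogonality A) {x y : H}
    (hxy : ⟪x, y⟫ = 0) (hn : ‖x‖ = ‖y‖) : ‖A x‖ ^ 2 = ‖A y‖ ^ 2 := by
  have h := congrArg RCLike.re (hA.inner_map_smul_map_smul_eq hxy hn 1 1)
  simpa only [one_smul, map_one, one_mul, inner_self_eq_norm_sq] using h

theorem exists_norm_map_eq (hA : PreservesOrthogonality A) {e f : H}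
    (he : ‖e‖ = 1) (hf : ‖f‖ = 1) (hef : ⟪e, f⟫ = 0) :
    ∃ γ, 0 ≤ γ ∧ ∀ z, ‖A z‖ = γ * ‖z‖ := by
  let k : ℝ →+ ℝ := AddMonoidHom.mk' (fun t => RCLike.re ⟪A e, A ((t : ℂ) • e)⟫)
    (fun s t => by simp only [Complex.ofReal_add, add_smul, map_add, inner_add_right])
  have hsmul (a : ℂ) : ‖A (a • e)‖ ^ 2 = k (‖a‖ ^ 2) := by
    rw [← inner_self_eq_norm_sq (𝕜 := ℂ),
      hA.inner_map_smul_map_smul_self_eq hef (he.trans hf.symm), Complex.conj_mul',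
      ← Complex.ofReal_pow]
    rfl
  have hk := k.apply_eq_mul_of_map_nonneg fun t ht => by
    have h := hsmul (√t : ℂ)
    rw [Complex.norm_real, Real.norm_of_nonneg (Real.sqrt_nonneg t), Real.sq_sqrt ht] at h
    exact h ▸ sq_nonneg _
  refine ⟨√(k 1), Real.sqrt_nonneg _, fun z => ?_⟩
  set a := ⟪e, z⟫
  set w := z - a • e
  have hew : ⟪e, w⟫ = 0 := by simp [w, a, inner_self_eq_norm_sq_to_K, he]
  have haw : ⟪a • e, w⟫ = 0 := by rw [inner_smul_left, hew, mul_zero]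
  have hz : z = a • e + w := by simp [w]
  have hAw : ‖A w‖ ^ 2 = ‖A ((‖w‖ : ℂ) • e)‖ ^ 2 :=
    hA.norm_map_sq_eq_of_inner_eq_zero
      (by rw [inner_smul_right, inner_eq_zero_symm.1 hew, mul_zero]) (by simp [norm_smul, he])
  have hsq : ‖A z‖ ^ 2 = k 1 * ‖z‖ ^ 2 := calc
    ‖A z‖ ^ 2 = ‖A (a • e)‖ ^ 2 + ‖A w‖ ^ 2 := by
      rw [hz, map_add, norm_add_sq (𝕜 := ℂ), hA _ _ haw, map_zero, mul_zero, add_zero]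
    _ = k (‖a‖ ^ 2) + k (‖w‖ ^ 2) := by rw [hsmul, hAw, hsmul, Complex.norm_real, norm_norm]
    _ = k 1 * (‖a • e‖ ^ 2 + ‖w‖ ^ 2) := by rw [hk, hk (‖w‖ ^ 2), norm_smul, he]; ring
    _ = k 1 * ‖z‖ ^ 2 := by rw [hz, norm_add_sq (𝕜 := ℂ), haw, map_zero, mul_zero, add_zero]
  rw [← Real.sqrt_sq (norm_nonneg (A z)), hsq, Real.sqrt_mul' _ (sq_nonneg _),
    Real.sqrt_sq (norm_nonneg z)]

end PreservesOrthogonality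

end

/-- Every non-zero additive orthogonality preserving map between complex inner
product spaces (with `dim H ≥ 2`) is a positive scalar multiple of a real-linear
isometry; in particular it is real-linear and continuous. -/
theorem additive_orthogonality_preserving_eq_smul_realLinearIsometry
    {H K : Type*} [NormedAddCommGroup H] [InnerProductSpace ℂ H]
    [NormedAddCommGroup K] [InnerProductSpace ℂ K]
    (hdim : 2 ≤ Module.rank ℂ H)
    (A : H → K) (hA : A ≠ 0)
    (hadd : ∀ x y, A (x + y) = A x + A y)
    (hop : ∀ x y : H, ⟪x, y⟫ = 0 → ⟪A x, A y⟫ = 0) :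
    ∃ (γ : ℝ) (T : H →ₗᵢ[ℝ] K), 0 < γ ∧ (∀ x, A x = γ • T x) ∧
      (∀ (r : ℝ) (x : H), A (r • x) = r • A x) ∧ Continuous A := by
  let A' : H →+ K := AddMonoidHom.mk' A hadd
  obtain ⟨e, f, he, hf, hef⟩ := exists_orthonormal_pair_of_two_le_rank hdim
  obtain ⟨γ, hγ, hnorm⟩ : ∃ γ, 0 ≤ γ ∧ ∀ z, ‖A z‖ = γ * ‖z‖ :=
    PreservesOrthogonality.exists_norm_map_eq (A := A') hop he hf hef
  have hγpos : 0 < γ := hγ.lt_of_ne <| by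
    rintro rfl
    exact hA (funext fun x => by simpa using hnorm x)
  obtain ⟨T, hT⟩ : ∃ T : H →ₗᵢ[ℝ] K, ∀ x, A x = γ • T x :=
    A'.exists_linearIsometry_of_norm_map_eq hγpos hnorm
  refine ⟨γ, T, hγpos, hT, fun r x => ?_, ?_⟩
  · rw [hT, hT, T.map_smul, smul_comm]
  · rw [funext hT]
    exact T.continuous.const_smul γ
end

section
/- Let H and K be complex inner product spaces with dim(H) ≥ 2, and let T : H → K be a real-linear isometry preserving orthogonality. Then for each norm-one vector x₀ ∈ H there exist a unique scalar α(x₀) ∈ iℝ (i.e., a purely imaginary complex number) and a unique vector η(x₀) ∈ K such that: (1) ⟪η(x₀), T(x₀)⟫ = 0; (2) |α(x₀)|² + ‖η(x₀)‖² = ‖x₀‖² = 1; and (3) T(i x₀) = α(x₀) T(x₀) + η(x₀). In particular, the real part of ⟪T(i x₀), T(x₀)⟫ is zero. -/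
open scoped ComplexInnerProductSpace InnerProductSpace

open RCLike

/- Polarization recovers `re ⟪x, y⟫` from norms, so an additive isometry preserves real parts
of inner products; in particular `re ⟪T (i x₀), T x₀⟫ = re ⟪i x₀, x₀⟫ = 0`. The pair is then
forced to be the orthogonal decomposition of `T (i x₀)` along the unit vector `T x₀`, with
`α = ⟪T x₀, T (i x₀)⟫`, and Pythagoras gives `|α|² + ‖η‖² = ‖T (i x₀)‖² = ‖x₀‖²`. -/

theorem re_inner_map_map_of_map_add_of_norm_map
    {𝕜 𝕜' E F : Type*} [RCLike 𝕜] [RCLike 𝕜']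
    [NormedAddCommGroup E] [InnerProductSpace 𝕜 E]
    [NormedAddCommGroup F] [InnerProductSpace 𝕜' F]
    {T : E → F} (hadd : ∀ x y, T (x + y) = T x + T y) (hiso : ∀ x, ‖T x‖ = ‖x‖) (x y : E) :
    re ⟪T x, T y⟫_𝕜' = re ⟪x, y⟫_𝕜 := by
  rw [re_inner_eq_norm_add_mul_self_sub_norm_mul_self_sub_norm_mul_self_div_two,
    re_inner_eq_norm_add_mul_self_sub_norm_mul_self_sub_norm_mul_self_div_two, ← hadd,
    hiso, hiso, hiso]

section UnitVector

variable {𝕜 E : Type*} [RCLike 𝕜] [NormedAddCommGroup E] [InnerProductSpace 𝕜 E]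
  {v : E} (hv : ‖v‖ = 1)
include hv

theorem inner_smul_add_of_inner_eq_zero {η : E} (hη : ⟪η, v⟫_𝕜 = 0) (α : 𝕜) :
    ⟪v, α • v + η⟫_𝕜 = α := by
  rw [inner_add_right, inner_smul_right, inner_self_eq_one_of_norm_eq_one hv, mul_one,
    inner_eq_zero_symm.mp hη, add_zero]

theorem norm_smul_add_sq_of_inner_eq_zero {η : E} (hη : ⟪η, v⟫_𝕜 = 0) (α : 𝕜) :
    ‖α • v + η‖ ^ 2 = ‖α‖ ^ 2 + ‖η‖ ^ 2 := by
  have horth : ⟪α • v, η⟫_𝕜 = 0 := by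
    rw [inner_smul_left, inner_eq_zero_symm.mp hη, mul_zero]
  rw [sq, sq, sq, norm_add_sq_eq_norm_sq_add_norm_sq_of_inner_eq_zero _ _ horth, norm_smul, hv,
    mul_one]

theorem inner_sub_inner_smul_self_eq_zero (u : E) :
    ⟪u - ⟪v, u⟫_𝕜 • v, v⟫_𝕜 = 0 := by
  rw [inner_sub_left, inner_smul_left, inner_self_eq_one_of_norm_eq_one hv, mul_one,
    inner_conj_symm, sub_self]

end UnitVector

theorem realLinearIsometry_op_decomposition_general
    {H K : Type*} [NormedAddCommGroup H] [InnerProductSpace ℂ H]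
    [NormedAddCommGroup K] [InnerProductSpace ℂ K]
    (T : H → K)
    (hadd : ∀ x y, T (x + y) = T x + T y)
    (hiso : ∀ x, ‖T x‖ = ‖x‖)
    (x₀ : H) (hx₀ : ‖x₀‖ = 1) :
    (∃! p : ℂ × K, p.1.re = 0 ∧ ⟪p.2, T x₀⟫ = 0 ∧
        ‖p.1‖ ^ 2 + ‖p.2‖ ^ 2 = ‖x₀‖ ^ 2 ∧
        T (Complex.I • x₀) = p.1 • T x₀ + p.2) ∧
      (⟪T (Complex.I • x₀), T x₀⟫).re = 0 := by
  have hv : ‖T x₀‖ = 1 := by rw [hiso, hx₀]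
  have hre : (⟪T (Complex.I • x₀), T x₀⟫).re = 0 := by
    rw [← re_to_complex, re_inner_map_map_of_map_add_of_norm_map (𝕜 := ℂ) hadd hiso,
      inner_smul_left]
    simp [← Complex.ofReal_pow]
  set α := ⟪T x₀, T (Complex.I • x₀)⟫
  have hη : ⟪T (Complex.I • x₀) - α • T x₀, T x₀⟫ = 0 :=
    inner_sub_inner_smul_self_eq_zero hv _
  have hdec : T (Complex.I • x₀) = α • T x₀ + (T (Complex.I • x₀) - α • T x₀) :=
    (add_sub_cancel _ _).symm
  refine ⟨⟨(α, _), ⟨?_, hη, ?_, hdec⟩, ?_⟩, hre⟩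
  · show (⟪T x₀, T (Complex.I • x₀)⟫).re = 0
    rwa [← inner_conj_symm, Complex.conj_re]
  · rw [← norm_smul_add_sq_of_inner_eq_zero hv hη, ← hdec, hiso, norm_smul, Complex.norm_I,
      one_mul]
  · rintro ⟨β, w⟩ ⟨-, hw, -, hdec' : T (Complex.I • x₀) = β • T x₀ + w⟩
    have hβ : β = α := by rw [← inner_smul_add_of_inner_eq_zero hv hw β, ← hdec']
    rw [Prod.mk.injEq, hdec', hβ, add_sub_cancel_left]
    exact ⟨rfl, rfl⟩

/-- For a real-linear isometry `T` preserving orthogonality between complex inner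
product spaces with `dim H ≥ 2`, and every norm-one `x₀`, there are a unique purely
imaginary `α` and a unique `η ⊥ T x₀` with `|α|² + ‖η‖² = 1` and
`T(i x₀) = α • T x₀ + η`. In particular `re ⟪T(i x₀), T x₀⟫ = 0`. -/
theorem realLinearIsometry_op_decomposition
    {H K : Type*} [NormedAddCommGroup H] [InnerProductSpace ℂ H]
    [NormedAddCommGroup K] [InnerProductSpace ℂ K]
    (hdim : 2 ≤ Module.rank ℂ H)
    (T : H → K)
    (hadd : ∀ x y, T (x + y) = T x + T y)
    (hsmul : ∀ (r : ℝ) (x : H), T (r • x) = r • T x)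
    (hiso : ∀ x, ‖T x‖ = ‖x‖)
    (hop : ∀ x y : H, ⟪x, y⟫ = 0 → ⟪T x, T y⟫ = 0)
    (x₀ : H) (hx₀ : ‖x₀‖ = 1) :
    (∃! p : ℂ × K, p.1.re = 0 ∧ ⟪p.2, T x₀⟫ = 0 ∧
        ‖p.1‖ ^ 2 + ‖p.2‖ ^ 2 = ‖x₀‖ ^ 2 ∧
        T (Complex.I • x₀) = p.1 • T x₀ + p.2) ∧
      (⟪T (Complex.I • x₀), T x₀⟫).re = 0 :=
  realLinearIsometry_op_decomposition_general T hadd hiso x₀ hx₀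
end

section
/- Let H and K be complex inner product spaces with dim(H) ≥ 2, and let T : H → K be a real-linear isometry preserving orthogonality. Suppose there exists a norm-one element x₀ ∈ H of pure complex type for T, i.e., T(i x₀) = i s₀ T(x₀) with s₀ ∈ {1, -1}. Then every norm-one vector x₁ ∈ H with ⟪x₁, x₀⟫ = 0 is of pure complex type with the same sign, that is, T(i x₁) = i s₀ T(x₁). -/
open scoped ComplexInnerProductSpace

/-- If a real-linear isometry `T` preserving orthogonality has a norm-one point `x₀`
of pure complex type, i.e. `T(i x₀) = i s₀ T(x₀)` with `s₀ ∈ {1, -1}`, then every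
norm-one vector orthogonal to `x₀` is of pure complex type with the same sign. -/
theorem pure_complex_type_of_orthogonal
    {H K : Type*} [NormedAddCommGroup H] [InnerProductSpace ℂ H]
    [NormedAddCommGroup K] [InnerProductSpace ℂ K]
    (hdim : 2 ≤ Module.rank ℂ H)
    (T : H → K)
    (hadd : ∀ x y, T (x + y) = T x + T y)
    (hsmul : ∀ (r : ℝ) (x : H), T (r • x) = r • T x)
    (hiso : ∀ x, ‖T x‖ = ‖x‖)
    (hop : ∀ x y : H, ⟪x, y⟫ = 0 → ⟪T x, T y⟫ = 0)
    (x₀ : H) (hx₀ : ‖x₀‖ = 1)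
    (s₀ : ℝ) (hs₀ : s₀ = 1 ∨ s₀ = -1)
    (hpure : T (Complex.I • x₀) = (Complex.I * (s₀ : ℂ)) • T x₀) :
    ∀ x₁ : H, ‖x₁‖ = 1 → ⟪x₁, x₀⟫ = 0 →
      T (Complex.I • x₁) = (Complex.I * (s₀ : ℂ)) • T x₁ := by
  intro x₁ hx₁ horth
  have hs₀sq : s₀ ^ 2 = 1 := by rcases hs₀ with h | h <;> simp [h]
  have hx01 : ⟪x₀, x₁⟫ = 0 := by rw [← inner_conj_symm, horth, map_zero]
  have hTneg : ∀ x : H, T (-x) = - T x := by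
    intro x; simpa using hsmul (-1) x
  have hTsub : ∀ x y : H, T (x - y) = T x - T y := by
    intro x y
    rw [sub_eq_add_neg, hadd, hTneg, ← sub_eq_add_neg]
  have hself0 : ⟪x₀, x₀⟫ = (1 : ℂ) := by
    rw [inner_self_eq_norm_sq_to_K, hx₀]; norm_num
  have hself1 : ⟪x₁, x₁⟫ = (1 : ℂ) := by
    rw [inner_self_eq_norm_sq_to_K, hx₁]; norm_num
  -- orthogonality of images
  have h1 : ⟪T x₁, T x₀⟫ = 0 := hop _ _ horth
  have h2 : ⟪T x₀, T (Complex.I • x₁)⟫ = 0 := by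
    apply hop
    rw [inner_smul_right, hx01, mul_zero]
  -- key orthogonality
  have h3 : ⟪T (x₀ - x₁), T (Complex.I • (x₀ + x₁))⟫ = 0 := by
    apply hop
    rw [inner_smul_right, inner_sub_left, inner_add_right, inner_add_right,
      hself0, hself1, horth, hx01]
    ring
  rw [hTsub, smul_add, hadd, hpure] at h3
  rw [inner_sub_left, inner_add_right, inner_add_right, inner_smul_right,
    inner_smul_right, h1, h2] at h3
  have hTself0 : ⟪T x₀, T x₀⟫ = (1 : ℂ) := by
    rw [inner_self_eq_norm_sq_to_K, hiso, hx₀]; norm_num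
  rw [hTself0] at h3
  -- so ⟪T x₁, T (I • x₁)⟫ = I * s₀
  have hkey : ⟪T x₁, T (Complex.I • x₁)⟫ = Complex.I * (s₀ : ℂ) := by
    linear_combination -h3
  -- now show the difference is zero
  have hn1 : ‖T x₁‖ = 1 := by rw [hiso, hx₁]
  have hn2 : ‖T (Complex.I • x₁)‖ = 1 := by
    rw [hiso, norm_smul, Complex.norm_I, one_mul, hx₁]
  have hnorm : ‖T (Complex.I • x₁) - (Complex.I * (s₀ : ℂ)) • T x₁‖ ^ 2 = 0 := by
    rw [@norm_sub_sq ℂ]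
    rw [inner_smul_right, ← inner_conj_symm, hkey]
    rw [norm_smul, hn1, hn2]
    have hc : Complex.I * (s₀:ℂ) * (starRingEnd ℂ) (Complex.I * (s₀:ℂ)) = ((s₀^2 : ℝ) : ℂ) := by
      simp [map_mul, Complex.conj_I, Complex.conj_ofReal]
      linear_combination (-(s₀:ℂ)^2) * Complex.I_sq
    rw [hc, hs₀sq, norm_mul, Complex.norm_I]
    norm_num [Complex.norm_real]
    linarith [hs₀sq]
  have hzero : T (Complex.I • x₁) - (Complex.I * (s₀ : ℂ)) • T x₁ = 0 := by
    rw [← norm_eq_zero]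
    have := pow_eq_zero_iff (n := 2) (by norm_num) |>.mp hnorm
    exact this
  exact sub_eq_zero.mp hzero
end

section
/- Let H and K be complex inner product spaces with dim(H) ≥ 2, and let T : H → K be a real-linear isometry preserving orthogonality. For a norm-one vector z ∈ H write T(i z) = i s(z) T(z) + η(z), where i s(z) = ⟪T(i z), T(z)⟫ with s(z) ∈ ℝ and ⟪η(z), T(z)⟫ = 0. Suppose x₀ ∈ H is norm-one and of mixed complex type for T, i.e., η(x₀) ≠ 0. Then every norm-one element x₁ ∈ H with ⟪x₁, x₀⟫ = 0 is of mixed complex type for T (η(x₁) ≠ 0); moreover s(x₀) = s(x₁), ‖η(x₀)‖ = ‖η(x₁)‖ ≠ 0, and each of T(x₀), η(x₀) is orthogonal to each of T(x₁), η(x₁) in K. -/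
/-!
The vectors `x₀ - x₁` and `i (x₀ + x₁)` are orthogonal, so their images are. Expanding,
the cross terms vanish because the complex planes `span {T x, T (i x)}` for `x = x₀, x₁`
are orthogonal; what is left is
`⟪T(i x₀), T x₀⟫ = ⟪T(i x₁), T x₁⟫`, i.e. `s(x₀) = s(x₁)`. Pythagoras in
`T(i x) = i s(x) T(x) + η(x)` gives `s(x)² + ‖η(x)‖² = 1`, hence `‖η(x₀)‖ = ‖η(x₁)‖`;
and `η(x)` lies in the plane `span {T x, T (i x)}`.
-/

open scoped ComplexInnerProductSpace
open Complex Submodule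

section

variable {H K : Type*} [NormedAddCommGroup H] [InnerProductSpace ℂ H]
  [NormedAddCommGroup K] [InnerProductSpace ℂ K]

theorem isOrtho_span_map_pair_of_inner_eq_zero {T : H → K}
    (hop : ∀ x y : H, ⟪x, y⟫ = 0 → ⟪T x, T y⟫ = 0) {x y : H} (h : ⟪x, y⟫ = 0) :
    span ℂ {T x, T (I • x)} ⟂ span ℂ {T y, T (I • y)} := by
  have key (a b : ℂ) : ⟪T (a • x), T (b • y)⟫ = 0 :=
    hop _ _ (by rw [inner_smul_left, inner_smul_right, h, mul_zero, mul_zero])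
  rw [isOrtho_span]
  rintro u (rfl | rfl | -) v (rfl | rfl | -)
  · simpa using key 1 1
  · simpa using key 1 I
  · simpa using key I 1
  · exact key I I

theorem mem_span_pair_of_eq_smul_add {u v η : K} {c : ℂ} (h : u = c • v + η) :
    η ∈ span ℂ {v, u} := by
  rw [eq_sub_of_add_eq' h.symm]
  exact sub_mem (subset_span (by simp)) (smul_mem _ _ (subset_span (by simp)))

theorem inner_I_smul_add_I_smul_sub_eq_zero {x y : H} (h : ⟪x, y⟫ = 0)
    (hn : ‖x‖ = ‖y‖) :
    ⟪I • x + I • y, x - y⟫ = 0 := by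
  rw [← smul_add, inner_smul_left, inner_add_left, inner_sub_right, inner_sub_right,
    inner_eq_zero_symm.mp h, h, inner_self_eq_norm_sq_to_K, inner_self_eq_norm_sq_to_K, hn]
  ring

theorem inner_map_I_smul_self_eq_of_inner_eq_zero (T : H →+ K)
    (hop : ∀ x y : H, ⟪x, y⟫ = 0 → ⟪T x, T y⟫ = 0) {x y : H} (h : ⟪x, y⟫ = 0)
    (hn : ‖x‖ = ‖y‖) : ⟪T (I • x), T x⟫ = ⟪T (I • y), T y⟫ := by
  have hxy : ⟪T (I • x), T y⟫ = 0 :=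
    (isOrtho_span_map_pair_of_inner_eq_zero hop h).inner_eq
      (subset_span (by simp)) (subset_span (by simp))
  have hyx : ⟪T (I • y), T x⟫ = 0 :=
    (isOrtho_span_map_pair_of_inner_eq_zero hop (inner_eq_zero_symm.mp h)).inner_eq
      (subset_span (by simp)) (subset_span (by simp))
  have hsum := hop _ _ (inner_I_smul_add_I_smul_sub_eq_zero h hn)
  rw [map_add, map_sub, inner_add_left, inner_sub_right, inner_sub_right, hxy, hyx] at hsum
  linear_combination hsum

theorem sq_add_norm_sq_eq_one_of_map_I_smul_eq {T : H → K} (hiso : ∀ x, ‖T x‖ = ‖x‖)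
    {x : H} (hx : ‖x‖ = 1) {s : ℝ} {η : K} (hη : ⟪η, T x⟫ = 0)
    (hdec : T (I • x) = (I * s) • T x + η) : s ^ 2 + ‖η‖ ^ 2 = 1 := by
  have hpyth := norm_add_sq_eq_norm_sq_add_norm_sq_of_inner_eq_zero ((I * s) • T x) η
    (by rw [inner_smul_left, inner_eq_zero_symm.mp hη, mul_zero])
  rw [← hdec, hiso, norm_smul, norm_smul, hiso, hx, norm_mul, norm_I, norm_real,
    Real.norm_eq_abs] at hpyth
  nlinarith [sq_abs s]

end

theorem mixed_complex_type_of_orthogonal_general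
    {H K : Type*} [NormedAddCommGroup H] [InnerProductSpace ℂ H]
    [NormedAddCommGroup K] [InnerProductSpace ℂ K]
    (T : H → K)
    (hadd : ∀ x y, T (x + y) = T x + T y)
    (hiso : ∀ x, ‖T x‖ = ‖x‖)
    (hop : ∀ x y : H, ⟪x, y⟫ = 0 → ⟪T x, T y⟫ = 0)
    (x₀ x₁ : H) (hx₀ : ‖x₀‖ = 1) (hx₁ : ‖x₁‖ = 1) (horth : ⟪x₁, x₀⟫ = 0)
    (s₀ s₁ : ℝ) (η₀ η₁ : K)
    (hs₀ : ⟪T (Complex.I • x₀), T x₀⟫ = Complex.I * (s₀ : ℂ))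
    (hη₀ : ⟪η₀, T x₀⟫ = 0)
    (hdec₀ : T (Complex.I • x₀) = (Complex.I * (s₀ : ℂ)) • T x₀ + η₀)
    (hs₁ : ⟪T (Complex.I • x₁), T x₁⟫ = Complex.I * (s₁ : ℂ))
    (hη₁ : ⟪η₁, T x₁⟫ = 0)
    (hdec₁ : T (Complex.I • x₁) = (Complex.I * (s₁ : ℂ)) • T x₁ + η₁)
    (hmixed : η₀ ≠ 0) :
    η₁ ≠ 0 ∧ s₀ = s₁ ∧ ‖η₀‖ = ‖η₁‖ ∧ ‖η₀‖ ≠ 0 ∧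
      ⟪T x₀, T x₁⟫ = 0 ∧ ⟪T x₀, η₁⟫ = 0 ∧ ⟪η₀, T x₁⟫ = 0 ∧ ⟪η₀, η₁⟫ = 0 := by
  have hx : ⟪x₀, x₁⟫ = 0 := inner_eq_zero_symm.mp horth
  have hs : s₀ = s₁ := by
    have hI : ⟪T (I • x₀), T x₀⟫ = ⟪T (I • x₁), T x₁⟫ :=
      inner_map_I_smul_self_eq_of_inner_eq_zero (AddMonoidHom.mk' T hadd) hop hx
        (hx₀.trans hx₁.symm)
    rw [hs₀, hs₁] at hI
    exact_mod_cast mul_left_cancel₀ I_ne_zero hI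
  have hη : ‖η₀‖ = ‖η₁‖ := by
    have h₀ := sq_add_norm_sq_eq_one_of_map_I_smul_eq hiso hx₀ hη₀ hdec₀
    have h₁ := sq_add_norm_sq_eq_one_of_map_I_smul_eq hiso hx₁ hη₁ hdec₁
    subst hs
    exact (pow_left_inj₀ (norm_nonneg _) (norm_nonneg _) two_ne_zero).mp (by linarith)
  have hη₀ne : ‖η₀‖ ≠ 0 := norm_ne_zero_iff.mpr hmixed
  have hO := isOrtho_span_map_pair_of_inner_eq_zero hop hx
  have hT₀ : T x₀ ∈ span ℂ {T x₀, T (I • x₀)} := subset_span (by simp)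
  have hT₁ : T x₁ ∈ span ℂ {T x₁, T (I • x₁)} := subset_span (by simp)
  have hm₀ := mem_span_pair_of_eq_smul_add hdec₀
  have hm₁ := mem_span_pair_of_eq_smul_add hdec₁
  exact ⟨norm_ne_zero_iff.mp (hη ▸ hη₀ne), hs, hη, hη₀ne, hO.inner_eq hT₀ hT₁,
    hO.inner_eq hT₀ hm₁, hO.inner_eq hm₀ hT₁, hO.inner_eq hm₀ hm₁⟩

/-- If a real-linear isometry `T` preserving orthogonality has a norm-one point `x₀`
of mixed complex type (`η(x₀) ≠ 0` in the decomposition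
`T(i x₀) = i s(x₀) T(x₀) + η(x₀)`), then every norm-one `x₁ ⊥ x₀` is also of mixed
complex type, with `s(x₀) = s(x₁)`, `‖η(x₀)‖ = ‖η(x₁)‖ ≠ 0`, and
`{T(x₀), η(x₀)} ⊥ {T(x₁), η(x₁)}`. -/
theorem mixed_complex_type_of_orthogonal
    {H K : Type*} [NormedAddCommGroup H] [InnerProductSpace ℂ H]
    [NormedAddCommGroup K] [InnerProductSpace ℂ K]
    (hdim : 2 ≤ Module.rank ℂ H)
    (T : H → K)
    (hadd : ∀ x y, T (x + y) = T x + T y)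
    (hsmul : ∀ (r : ℝ) (x : H), T (r • x) = r • T x)
    (hiso : ∀ x, ‖T x‖ = ‖x‖)
    (hop : ∀ x y : H, ⟪x, y⟫ = 0 → ⟪T x, T y⟫ = 0)
    (x₀ x₁ : H) (hx₀ : ‖x₀‖ = 1) (hx₁ : ‖x₁‖ = 1) (horth : ⟪x₁, x₀⟫ = 0)
    (s₀ s₁ : ℝ) (η₀ η₁ : K)
    (hs₀ : ⟪T (Complex.I • x₀), T x₀⟫ = Complex.I * (s₀ : ℂ))
    (hη₀ : ⟪η₀, T x₀⟫ = 0)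
    (hdec₀ : T (Complex.I • x₀) = (Complex.I * (s₀ : ℂ)) • T x₀ + η₀)
    (hs₁ : ⟪T (Complex.I • x₁), T x₁⟫ = Complex.I * (s₁ : ℂ))
    (hη₁ : ⟪η₁, T x₁⟫ = 0)
    (hdec₁ : T (Complex.I • x₁) = (Complex.I * (s₁ : ℂ)) • T x₁ + η₁)
    (hmixed : η₀ ≠ 0) :
    η₁ ≠ 0 ∧ s₀ = s₁ ∧ ‖η₀‖ = ‖η₁‖ ∧ ‖η₀‖ ≠ 0 ∧
      ⟪T x₀, T x₁⟫ = 0 ∧ ⟪T x₀, η₁⟫ = 0 ∧ ⟪η₀, T x₁⟫ = 0 ∧ ⟪η₀, η₁⟫ = 0 :=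
  mixed_complex_type_of_orthogonal_general T hadd hiso hop x₀ x₁ hx₀ hx₁ horth s₀ s₁ η₀ η₁ hs₀ hη₀
    hdec₀ hs₁ hη₁ hdec₁ hmixed
end

section
/- Let H and K be complex inner product spaces with dim(H) ≥ 2, and let T : H → K be a real-linear isometry preserving orthogonality. Suppose there exists a norm-one element x₀ ∈ H with T(i x₀) = i s₀ T(x₀) for some s₀ ∈ {1, -1}. Then T(i x) = i s₀ T(x) for every x ∈ H; in particular every non-zero vector of H is of pure complex type for T with the same sign s₀. -/
/-!
Write `J = i s₀`, so `J² = -1`. The vectors `x` with `T (i x) = J T x` form a complex subspace,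
because `T` is real-linear and `i x` is again such a vector. If `y` is a unit vector orthogonal to
`x₀`, then `x₀ - i y ⟂ i x₀ - y`; applying `T` and expanding gives `⟪T (i y), T y⟫ = -J`, and as
both are unit vectors, the equality case of Cauchy–Schwarz forces `T (i y) = J T y`. So the subspace
contains `x₀` and `(ℂ x₀)ᗮ`, hence is everything.
-/

open scoped ComplexInnerProductSpace

section

variable {H K : Type*} [NormedAddCommGroup H] [InnerProductSpace ℂ H]
  [NormedAddCommGroup K] [InnerProductSpace ℂ K]

def IsPureComplexType (T : H →ₗ[ℝ] K) (s : ℝ) (x : H) : Prop :=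
  T (Complex.I • x) = (Complex.I * s) • T x

lemma isPureComplexType_I_smul {T : H →ₗ[ℝ] K} {s : ℝ} (hs : s * s = 1) {x : H}
    (hx : IsPureComplexType T s x) : IsPureComplexType T s (Complex.I • x) := by
  have hII : Complex.I • Complex.I • x = (-1 : ℝ) • x := by
    rw [smul_smul, Complex.I_mul_I, ← algebraMap_smul ℂ (-1 : ℝ) x]
    norm_num
  have hJJ : Complex.I * s * (Complex.I * s) = -1 := by
    have hs' : (s : ℂ) * s = 1 := by exact_mod_cast hs
    linear_combination (Complex.I * Complex.I) * hs' + Complex.I_mul_I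
  unfold IsPureComplexType at hx ⊢
  rw [hII, T.map_smul, hx, smul_smul, hJJ, neg_one_smul, neg_one_smul]

lemma isPureComplexType_real_smul {T : H →ₗ[ℝ] K} {s : ℝ} (r : ℝ) {x : H}
    (hx : IsPureComplexType T s x) : IsPureComplexType T s (r • x) := by
  unfold IsPureComplexType at hx ⊢
  rw [smul_comm, T.map_smul, hx, T.map_smul, smul_comm]

def pureComplexTypeSubmodule (T : H →ₗ[ℝ] K) (s : ℝ) (hs : s * s = 1) :
    Submodule ℂ H where
  carrier := {x | IsPureComplexType T s x}
  zero_mem' := by simp [IsPureComplexType]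
  add_mem' {x y} hx hy := by
    simp only [Set.mem_ofPred_eq, IsPureComplexType, smul_add, map_add] at *
    rw [hx, hy]
  smul_mem' c x hx := by
    have hc : c • x = c.re • x + c.im • (Complex.I • x) := by
      rw [← algebraMap_smul ℂ c.re x, ← algebraMap_smul ℂ c.im (Complex.I • x), smul_smul,
        ← add_smul]
      simp
    change IsPureComplexType T s (c • x)
    unfold IsPureComplexType at hx ⊢
    rw [hc, smul_add, map_add, map_add, smul_add, isPureComplexType_real_smul _ hx,
      isPureComplexType_real_smul _ (isPureComplexType_I_smul hs hx)]

variable {T : H →ₗ[ℝ] K} (hiso : ∀ x, ‖T x‖ = ‖x‖)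
  (hop : ∀ x y : H, ⟪x, y⟫ = 0 → ⟪T x, T y⟫ = 0)
include hiso hop

lemma isPureComplexType_of_inner_eq_zero {s : ℝ} (hs : s * s = 1) {x₀ y : H}
    (hx₀ : ‖x₀‖ = 1) (hy : ‖y‖ = 1) (hx₀y : ⟪x₀, y⟫ = 0) (hpure : IsPureComplexType T s x₀) :
    IsPureComplexType T s y := by
  have hyx₀ : ⟪y, x₀⟫ = 0 := by rw [← inner_conj_symm, hx₀y, map_zero]
  have horth : ⟪x₀ - Complex.I • y, Complex.I • x₀ - y⟫ = 0 := by
    simp only [inner_sub_left, inner_sub_right, inner_smul_left, inner_smul_right, hx₀y, hyx₀,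
      inner_self_eq_one_of_norm_eq_one hx₀, inner_self_eq_one_of_norm_eq_one hy, Complex.conj_I]
    ring
  have hTx₀ : ⟪T x₀, T x₀⟫ = 1 := inner_self_eq_one_of_norm_eq_one ((hiso x₀).trans hx₀)
  have hTx₀y : ⟪T x₀, T y⟫ = 0 := hop _ _ hx₀y
  have hTIyx₀ : ⟪T (Complex.I • y), T x₀⟫ = 0 :=
    hop _ _ (by rw [inner_smul_left, hyx₀, mul_zero])
  have hTIy : ⟪T (Complex.I • y), T y⟫ = -(Complex.I * s) := by
    have h := hop _ _ horth
    rw [map_sub, map_sub, hpure, inner_sub_left, inner_sub_right, inner_sub_right,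
      inner_smul_right, inner_smul_right, hTx₀, hTx₀y, hTIyx₀] at h
    linear_combination h
  have hnorm_Ty : ‖(Complex.I * s) • T y‖ = 1 := by
    rw [norm_smul, hiso, hy, norm_mul, Complex.norm_I, Complex.norm_real, Real.norm_eq_abs,
      abs_eq_abs.mpr (mul_self_eq_one_iff.mp hs), abs_one, one_mul, one_mul]
  have hnorm_TIy : ‖T (Complex.I • y)‖ = 1 := by
    rw [hiso, norm_smul, Complex.norm_I, hy, one_mul]
  have hinner : ⟪(Complex.I * s) • T y, T (Complex.I • y)⟫ = 1 := by
    have hs' : (s : ℂ) * s = 1 := by exact_mod_cast hs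
    rw [inner_smul_left, ← inner_conj_symm, hTIy]
    simp only [map_neg, map_mul, Complex.conj_I, Complex.conj_ofReal]
    linear_combination (-(Complex.I * Complex.I)) * hs' - Complex.I_mul_I
  have hCS := inner_eq_norm_mul_iff.mp (by rw [hinner, hnorm_Ty, hnorm_TIy]; norm_num)
  rw [hnorm_Ty, hnorm_TIy] at hCS
  simpa [IsPureComplexType] using hCS.symm

lemma orthogonal_le_pureComplexTypeSubmodule {s : ℝ} (hs : s * s = 1) {x₀ : H}
    (hx₀ : ‖x₀‖ = 1) (hpure : IsPureComplexType T s x₀) :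
    (ℂ ∙ x₀)ᗮ ≤ pureComplexTypeSubmodule T s hs := by
  intro y hy
  rcases eq_or_ne y 0 with rfl | hy0
  · exact Submodule.zero_mem _
  have hunit : (‖y‖⁻¹ : ℂ) • y ∈ (ℂ ∙ x₀)ᗮ := Submodule.smul_mem _ _ hy
  have hpure_unit := isPureComplexType_of_inner_eq_zero hiso hop hs hx₀ (norm_smul_inv_norm hy0)
    (Submodule.mem_orthogonal_singleton_iff_inner_right.mp hunit) hpure
  have hy_eq : y = (‖y‖ : ℂ) • (‖y‖⁻¹ : ℂ) • y := by
    rw [smul_smul, mul_inv_cancel₀ (by exact_mod_cast norm_ne_zero_iff.mpr hy0), one_smul]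
  rw [hy_eq]
  exact Submodule.smul_mem _ _ hpure_unit

lemma pureComplexTypeSubmodule_eq_top {s : ℝ} (hs : s * s = 1) {x₀ : H} (hx₀ : ‖x₀‖ = 1)
    (hpure : IsPureComplexType T s x₀) : pureComplexTypeSubmodule T s hs = ⊤ := by
  rw [eq_top_iff, ← Submodule.sup_orthogonal_of_hasOrthogonalProjection (K := ℂ ∙ x₀)]
  exact sup_le ((Submodule.span_singleton_le_iff_mem _ _).mpr hpure)
    (orthogonal_le_pureComplexTypeSubmodule hiso hop hs hx₀ hpure)

end

theorem pure_complex_type_everywhere_general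
    {H K : Type*} [NormedAddCommGroup H] [InnerProductSpace ℂ H]
    [NormedAddCommGroup K] [InnerProductSpace ℂ K]
    (T : H → K)
    (hadd : ∀ x y, T (x + y) = T x + T y)
    (hsmul : ∀ (r : ℝ) (x : H), T (r • x) = r • T x)
    (hiso : ∀ x, ‖T x‖ = ‖x‖)
    (hop : ∀ x y : H, ⟪x, y⟫ = 0 → ⟪T x, T y⟫ = 0)
    (x₀ : H) (hx₀ : ‖x₀‖ = 1)
    (s₀ : ℝ) (hs₀ : s₀ = 1 ∨ s₀ = -1)
    (hpure : T (Complex.I • x₀) = (Complex.I * (s₀ : ℂ)) • T x₀) :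
    ∀ x : H, T (Complex.I • x) = (Complex.I * (s₀ : ℂ)) • T x := by
  let Tₗ : H →ₗ[ℝ] K := { toFun := T, map_add' := hadd, map_smul' := hsmul }
  have hs : s₀ * s₀ = 1 := mul_self_eq_one_iff.mpr hs₀
  have htop := pureComplexTypeSubmodule_eq_top (T := Tₗ) hiso hop hs hx₀ hpure
  exact fun x => (htop ▸ Submodule.mem_top : x ∈ pureComplexTypeSubmodule Tₗ s₀ hs)

/-- If a real-linear isometry `T` preserving orthogonality between complex inner
product spaces (`dim H ≥ 2`) has one norm-one point `x₀` of pure complex type,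
`T(i x₀) = i s₀ T(x₀)` with `s₀ ∈ {1, -1}`, then `T(i x) = i s₀ T(x)` for all `x`. -/
theorem pure_complex_type_everywhere
    {H K : Type*} [NormedAddCommGroup H] [InnerProductSpace ℂ H]
    [NormedAddCommGroup K] [InnerProductSpace ℂ K]
    (hdim : 2 ≤ Module.rank ℂ H)
    (T : H → K)
    (hadd : ∀ x y, T (x + y) = T x + T y)
    (hsmul : ∀ (r : ℝ) (x : H), T (r • x) = r • T x)
    (hiso : ∀ x, ‖T x‖ = ‖x‖)
    (hop : ∀ x y : H, ⟪x, y⟫ = 0 → ⟪T x, T y⟫ = 0)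
    (x₀ : H) (hx₀ : ‖x₀‖ = 1)
    (s₀ : ℝ) (hs₀ : s₀ = 1 ∨ s₀ = -1)
    (hpure : T (Complex.I • x₀) = (Complex.I * (s₀ : ℂ)) • T x₀) :
    ∀ x : H, T (Complex.I • x) = (Complex.I * (s₀ : ℂ)) • T x :=
  pure_complex_type_everywhere_general T hadd hsmul hiso hop x₀ hx₀ s₀ hs₀ hpure
end

section
/- Let H and K be complex inner product spaces with dim(H) ≥ 2, and let T : H → K be a real-linear isometry preserving orthogonality. If there exists a non-zero point x₀ ∈ H such that i T(x₀) lies in the image T(H), then T is complex-linear or conjugate-linear. -/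
/-!
A real-linear isometry preserves `re ⟪·, ·⟫`. Together with preservation of orthogonality this
forces `T y₀ = I • T x₀` to come from `y₀ = c • x₀` with `c = ±I`, so that `T (I • x₀) = c • T x₀`.
The vectors `x` with `T (I • x) = c • T x` form a complex subspace, and this property passes from
`x` to every `y ⊥ x` of the same norm: `x + I • y ⊥ I • x + y` gives
`⟪T (I • y), T y⟫ = -c ‖y‖²`, and as `‖T (I • y)‖ = ‖c • T y‖ = ‖y‖` this forces
`T (I • y) = c • T y`. So the subspace contains `ℂ ∙ x₀ ⊔ (ℂ ∙ x₀)ᗮ`, which is everything.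
-/

open scoped ComplexInnerProductSpace

open Complex

namespace LinearMap

variable {H K : Type*} [AddCommGroup H] [Module ℂ H] [AddCommGroup K] [Module ℂ K]

theorem map_complex_smul (T : H →ₗ[ℝ] K) (c : ℂ) (x : H) :
    T (c • x) = c.re • T x + c.im • T (I • x) := by
  conv_lhs => rw [← re_add_im c, add_smul, mul_smul, Complex.coe_smul, Complex.coe_smul]
  rw [map_add, map_smul, map_smul]

def intertwiningSubmodule (T : H →ₗ[ℝ] K) {s : ℂ} (hs : s * s = -1) : Submodule ℂ H where
  carrier := {x | T (I • x) = s • T x}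
  add_mem' {x y} hx hy := by
    simp only [Set.mem_ofPred_eq, smul_add, map_add] at *
    rw [hx, hy]
  zero_mem' := by simp
  smul_mem' c x hx := by
    simp only [Set.mem_ofPred_eq] at *
    have hII : T (I • I • x) = -T x := by rw [smul_smul, I_mul_I, neg_one_smul, map_neg]
    rw [smul_comm, T.map_complex_smul c (I • x), T.map_complex_smul c x, hx, hII]
    linear_combination (norm := module) -(hs • (c.im • T x))

variable (T : H →ₗ[ℝ] K) {s : ℂ} (hs : s * s = -1)

theorem mem_intertwiningSubmodule {x : H} :
    x ∈ T.intertwiningSubmodule hs ↔ T (I • x) = s • T x :=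
  Iff.rfl

theorem map_smul_of_mem_intertwiningSubmodule {x : H} (hx : x ∈ T.intertwiningSubmodule hs)
    (c : ℂ) : T (c • x) = (c.re + c.im * s) • T x := by
  rw [map_complex_smul, hx, add_smul, mul_smul, Complex.coe_smul, Complex.coe_smul]

end LinearMap

namespace LinearIsometry

variable {H K : Type*} [NormedAddCommGroup H] [InnerProductSpace ℂ H]
  [NormedAddCommGroup K] [InnerProductSpace ℂ K] (T : H →ₗᵢ[ℝ] K)

theorem re_inner_map_map (x y : H) : (⟪T x, T y⟫).re = (⟪x, y⟫).re := by
  simp only [← RCLike.re_to_complex,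
    re_inner_eq_norm_add_mul_self_sub_norm_mul_self_sub_norm_mul_self_div_two, ← map_add,
    T.norm_map]

theorem mem_span_singleton_of_map_eq_I_smul (hT : ∀ x y : H, ⟪x, y⟫ = 0 → ⟪T x, T y⟫ = 0)
    {x y : H} (h : T y = I • T x) : y ∈ ℂ ∙ x := by
  rw [← Submodule.orthogonal_orthogonal (ℂ ∙ x), Submodule.mem_orthogonal]
  intro z hz
  rw [Submodule.mem_orthogonal_singleton_iff_inner_right] at hz
  have re_inner_eq_zero : ∀ w, ⟪x, w⟫ = 0 → (⟪w, y⟫).re = 0 := fun w hw => by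
    rw [← T.re_inner_map_map, h, inner_smul_right, hT _ _ (inner_eq_zero_symm.mp hw), mul_zero,
      zero_re]
  apply Complex.ext
  · exact re_inner_eq_zero z hz
  · simpa [inner_smul_left] using re_inner_eq_zero (I • z) (by rw [inner_smul_right, hz, mul_zero])

theorem eq_I_or_eq_neg_I_of_map_smul_eq_I_smul {c : ℂ} {x : H} (hx : x ≠ 0)
    (h : T (c • x) = I • T x) : c = I ∨ c = -I := by
  have hx' : ‖x‖ ≠ 0 := norm_ne_zero_iff.mpr hx
  have hnorm : ‖c‖ = 1 := by
    have := congrArg norm h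
    rw [T.norm_map, norm_smul, norm_smul, norm_I, one_mul, T.norm_map] at this
    exact (mul_eq_right₀ hx').mp this
  have hre : c.re = 0 := by
    have := T.re_inner_map_map x (c • x)
    rw [h, inner_smul_right, inner_smul_right, inner_self_eq_norm_sq_to_K,
      inner_self_eq_norm_sq_to_K, T.norm_map] at this
    simpa [← Complex.ofReal_pow, hx'] using this.symm
  have him : c.im * c.im = 1 := by
    have := Complex.normSq_eq_norm_sq c
    rw [hnorm, normSq_apply, hre] at this
    linarith
  rcases mul_self_eq_one_iff.mp him with h1 | h1
  · exact .inl (Complex.ext hre h1)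
  · exact .inr (Complex.ext (by simpa using hre) (by simpa using h1))

theorem mem_intertwiningSubmodule_of_inner_eq_zero
    (hT : ∀ x y : H, ⟪x, y⟫ = 0 → ⟪T x, T y⟫ = 0) {s : ℂ} (hs : s * s = -1) {x y : H}
    (hx : x ∈ T.toLinearMap.intertwiningSubmodule hs) (hxy : ⟪x, y⟫ = 0) (hnorm : ‖x‖ = ‖y‖) :
    y ∈ T.toLinearMap.intertwiningSubmodule hs := by
  simp only [LinearMap.mem_intertwiningSubmodule, coe_toLinearMap] at hx ⊢
  have hyx : ⟪y, x⟫ = 0 := inner_eq_zero_symm.mp hxy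
  have horth : ⟪x + I • y, I • x + y⟫ = 0 := by
    simp only [inner_add_left, inner_add_right, inner_smul_left, inner_smul_right, hxy, hyx,
      inner_self_eq_norm_sq_to_K, hnorm, conj_I]
    ring
  have hinner : ⟪T (I • y), T y⟫ = -(s * (‖y‖ : ℂ) ^ 2) := by
    have h := hT _ _ horth
    rw [map_add, map_add, hx, inner_add_left, inner_add_right, inner_add_right, inner_smul_right,
      inner_smul_right, hT x y hxy, hT (I • y) x (by rw [inner_smul_left, hyx, mul_zero]),
      inner_self_eq_norm_sq_to_K, T.norm_map, hnorm] at h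
    linear_combination h
  have hs_norm : ‖s‖ = 1 := by
    have h := congrArg norm hs
    rw [norm_mul, norm_neg, norm_one, ← sq] at h
    exact (pow_eq_one_iff_of_nonneg (norm_nonneg s) two_ne_zero).mp h
  rw [← sub_eq_zero, ← norm_eq_zero, ← sq_eq_zero_iff, norm_sub_sq (𝕜 := ℂ), inner_smul_right,
    hinner, norm_smul, hs_norm, one_mul, T.norm_map, T.norm_map]
  simp only [norm_smul, norm_I, one_mul, ← ofReal_pow, mul_neg, ← mul_assoc, hs, neg_mul, neg_neg,
    RCLike.re_to_complex, ofReal_re]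
  ring

theorem orthogonal_span_singleton_le_intertwiningSubmodule
    (hT : ∀ x y : H, ⟪x, y⟫ = 0 → ⟪T x, T y⟫ = 0) {s : ℂ} (hs : s * s = -1) {x : H}
    (hx₀ : x ≠ 0) (hx : x ∈ T.toLinearMap.intertwiningSubmodule hs) :
    (ℂ ∙ x)ᗮ ≤ T.toLinearMap.intertwiningSubmodule hs := by
  intro y hy
  rw [Submodule.mem_orthogonal_singleton_iff_inner_right] at hy
  have hr : ‖((‖y‖ / ‖x‖ : ℝ) : ℂ) • x‖ = ‖y‖ := by
    rw [norm_smul, norm_real, Real.norm_of_nonneg (by positivity),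
      div_mul_cancel₀ _ (norm_ne_zero_iff.mpr hx₀)]
  refine T.mem_intertwiningSubmodule_of_inner_eq_zero hT hs (Submodule.smul_mem _ _ hx) ?_ hr
  rw [inner_smul_left, hy, mul_zero]

theorem intertwiningSubmodule_eq_top
    (hT : ∀ x y : H, ⟪x, y⟫ = 0 → ⟪T x, T y⟫ = 0) {s : ℂ} (hs : s * s = -1) {x : H}
    (hx₀ : x ≠ 0) (hx : x ∈ T.toLinearMap.intertwiningSubmodule hs) :
    T.toLinearMap.intertwiningSubmodule hs = ⊤ := by
  rw [eq_top_iff, ← Submodule.sup_orthogonal_of_hasOrthogonalProjection (K := ℂ ∙ x)]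
  exact sup_le ((Submodule.span_singleton_le_iff_mem _ _).mpr hx)
    (T.orthogonal_span_singleton_le_intertwiningSubmodule hT hs hx₀ hx)

end LinearIsometry

theorem complexLinear_or_conjugateLinear_of_smul_I_mem_range_general
    {H K : Type*} [NormedAddCommGroup H] [InnerProductSpace ℂ H]
    [NormedAddCommGroup K] [InnerProductSpace ℂ K]
    (T : H → K)
    (hadd : ∀ x y, T (x + y) = T x + T y)
    (hsmul : ∀ (r : ℝ) (x : H), T (r • x) = r • T x)
    (hiso : ∀ x, ‖T x‖ = ‖x‖)
    (hop : ∀ x y : H, ⟪x, y⟫ = 0 → ⟪T x, T y⟫ = 0)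
    (hx₀ : ∃ x₀ : H, x₀ ≠ 0 ∧ Complex.I • T x₀ ∈ Set.range T) :
    (∀ (l : ℂ) (x : H), T (l • x) = l • T x) ∨
      (∀ (l : ℂ) (x : H), T (l • x) = (starRingEnd ℂ l) • T x) := by
  let T' : H →ₗᵢ[ℝ] K := ⟨⟨⟨T, hadd⟩, hsmul⟩, hiso⟩
  obtain ⟨x₀, hx₀, y₀, hy₀⟩ := hx₀
  replace hy₀ : T' y₀ = I • T' x₀ := hy₀
  obtain ⟨c, rfl⟩ :=
    Submodule.mem_span_singleton.mp (T'.mem_span_singleton_of_map_eq_I_smul hop hy₀)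
  have hc := T'.eq_I_or_eq_neg_I_of_map_smul_eq_I_smul hx₀ hy₀
  have hcc : c * c = -1 := by rcases hc with rfl | rfl <;> simp
  have hmem : x₀ ∈ T'.toLinearMap.intertwiningSubmodule hcc := by
    rcases hc with rfl | rfl
    · exact hy₀
    · rw [LinearMap.mem_intertwiningSubmodule, LinearIsometry.coe_toLinearMap, neg_smul, ← hy₀,
        neg_smul, map_neg, neg_neg]
  have htop := T'.intertwiningSubmodule_eq_top hop hcc hx₀ hmem
  have hmap (l : ℂ) (x : H) : T (l • x) = (l.re + l.im * c) • T x :=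
    T'.toLinearMap.map_smul_of_mem_intertwiningSubmodule hcc (htop ▸ Submodule.mem_top) l
  rcases hc with rfl | rfl
  · exact .inl fun l x => by rw [hmap, re_add_im]
  · exact .inr fun l x => by rw [hmap]; congr 1; apply Complex.ext <;> simp

/-- If a real-linear isometry `T` preserving orthogonality between complex inner
product spaces (`dim H ≥ 2`) satisfies `i T(x₀) ∈ T(H)` for some non-zero `x₀`,
then `T` is complex-linear or conjugate-linear. -/
theorem complexLinear_or_conjugateLinear_of_smul_I_mem_range
    {H K : Type*} [NormedAddCommGroup H] [InnerProductSpace ℂ H]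
    [NormedAddCommGroup K] [InnerProductSpace ℂ K]
    (hdim : 2 ≤ Module.rank ℂ H)
    (T : H → K)
    (hadd : ∀ x y, T (x + y) = T x + T y)
    (hsmul : ∀ (r : ℝ) (x : H), T (r • x) = r • T x)
    (hiso : ∀ x, ‖T x‖ = ‖x‖)
    (hop : ∀ x y : H, ⟪x, y⟫ = 0 → ⟪T x, T y⟫ = 0)
    (hx₀ : ∃ x₀ : H, x₀ ≠ 0 ∧ Complex.I • T x₀ ∈ Set.range T) :
    (∀ (l : ℂ) (x : H), T (l • x) = l • T x) ∨
      (∀ (l : ℂ) (x : H), T (l • x) = (starRingEnd ℂ l) • T x) :=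
  complexLinear_or_conjugateLinear_of_smul_I_mem_range_general T hadd hsmul hiso hop hx₀
end

section
/- Let T : H̃ → K̃ be a real-linear isometry preserving orthogonality between two complex Hilbert spaces with dim(H̃) ≥ 2. Then there exists a bounded (continuous) real-linear map R : K̃ → K̃ such that the composition R ∘ T : H̃ → K̃ is a complex-linear isometry preserving orthogonality. -/
open scoped ComplexInnerProductSpace

/-!
The images under `T` of a Hilbert basis of `H` are orthonormal in `K`, so they span a copy of `H`
inside `K`: this gives a complex-linear isometry `S : H → K`. Since `T` is a real isometry of a
complete space, its range `M` is a closed real subspace, and `R := S ∘ T⁻¹ ∘ P_M` (with `P_M` the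
real orthogonal projection) is a bounded real-linear map with `R ∘ T = S`.
-/

theorem Orthonormal.comp_of_norm_map_of_inner_eq_zero {𝕜 E F ι : Type*} [RCLike 𝕜]
    [NormedAddCommGroup E] [InnerProductSpace 𝕜 E] [NormedAddCommGroup F] [InnerProductSpace 𝕜 F]
    {v : ι → E} (hv : Orthonormal 𝕜 v) (T : E → F) (hiso : ∀ x, ‖T x‖ = ‖x‖)
    (hop : ∀ x y : E, inner 𝕜 x y = 0 → inner 𝕜 (T x) (T y) = 0) :
    Orthonormal 𝕜 (T ∘ v) :=
  ⟨fun i => (hiso _).trans (hv.1 i), fun _ _ hij => hop _ _ (hv.2 hij)⟩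

theorem exists_linearIsometry_of_norm_map_of_inner_eq_zero {𝕜 E F : Type*} [RCLike 𝕜]
    [NormedAddCommGroup E] [InnerProductSpace 𝕜 E] [CompleteSpace E]
    [NormedAddCommGroup F] [InnerProductSpace 𝕜 F] [CompleteSpace F]
    (T : E → F) (hiso : ∀ x, ‖T x‖ = ‖x‖)
    (hop : ∀ x y : E, inner 𝕜 x y = 0 → inner 𝕜 (T x) (T y) = 0) :
    Nonempty (E →ₗᵢ[𝕜] F) := by
  obtain ⟨w, b, hb⟩ := exists_hilbertBasis 𝕜 E
  have hv : Orthonormal 𝕜 (T ∘ ((↑) : w → E)) :=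
    (hb ▸ b.orthonormal).comp_of_norm_map_of_inner_eq_zero T hiso hop
  exact ⟨hv.orthogonalFamily.linearIsometry.comp b.repr.toLinearIsometry⟩

theorem LinearIsometry.exists_continuousLinearMap_comp_eq {E F G : Type*}
    [NormedAddCommGroup E] [NormedSpace ℝ E] [CompleteSpace E]
    [NormedAddCommGroup F] [InnerProductSpace ℝ F] [NormedAddCommGroup G] [NormedSpace ℝ G]
    (T : E →ₗᵢ[ℝ] F) (S : E →L[ℝ] G) :
    ∃ R : F →L[ℝ] G, ∀ x, R (T x) = S x := by
  have : CompleteSpace (LinearMap.range T.toLinearMap) := completeSpace_coe_iff_isComplete.2 <| by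
    rw [LinearMap.coe_range]
    exact T.isometry.isUniformInducing.isComplete_range
  let e := T.equivRange
  refine ⟨(S.comp e.symm.toContinuousLinearEquiv.toContinuousLinearMap).comp
    (LinearMap.range T.toLinearMap).orthogonalProjectionOnto, fun x => ?_⟩
  have hP : (LinearMap.range T.toLinearMap).orthogonalProjectionOnto (T x) = e x :=
    Submodule.orthogonalProjectionOnto_mem_subspace_eq_self (e x)
  simp [hP]

theorem exists_boundedRealLinear_compose_complexLinear_general
    {H K : Type*} [NormedAddCommGroup H] [InnerProductSpace ℂ H] [CompleteSpace H]
    [NormedAddCommGroup K] [InnerProductSpace ℂ K] [CompleteSpace K]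
    (T : H → K)
    (hadd : ∀ x y, T (x + y) = T x + T y)
    (hsmul : ∀ (r : ℝ) (x : H), T (r • x) = r • T x)
    (hiso : ∀ x, ‖T x‖ = ‖x‖)
    (hop : ∀ x y : H, ⟪x, y⟫ = 0 → ⟪T x, T y⟫ = 0) :
    ∃ R : K →L[ℝ] K,
      (∀ x y : H, R (T (x + y)) = R (T x) + R (T y)) ∧
      (∀ (l : ℂ) (x : H), R (T (l • x)) = l • R (T x)) ∧
      (∀ x : H, ‖R (T x)‖ = ‖x‖) ∧
      (∀ x y : H, ⟪x, y⟫ = 0 → ⟪R (T x), R (T y)⟫ = 0) := by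
  let : InnerProductSpace ℝ K := InnerProductSpace.complexToReal
  obtain ⟨S⟩ := exists_linearIsometry_of_norm_map_of_inner_eq_zero T hiso hop
  let Tℝ : H →ₗᵢ[ℝ] K := ⟨⟨⟨T, hadd⟩, hsmul⟩, hiso⟩
  obtain ⟨R, hR⟩ :=
    Tℝ.exists_continuousLinearMap_comp_eq (S.toContinuousLinearMap.restrictScalars ℝ)
  have hRT : ∀ x, R (T x) = S x := hR
  refine ⟨R, fun x y => ?_, fun l x => ?_, fun x => ?_, fun x y hxy => ?_⟩
  · simp only [hRT, map_add]
  · simp only [hRT, map_smul]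
  · rw [hRT, S.norm_map]
  · rwa [hRT, hRT, S.inner_map_map]

/-- For every real-linear isometry `T` preserving orthogonality between complex
Hilbert spaces (`dim H̃ ≥ 2`) there is a bounded real-linear map `R` on the target
such that `R ∘ T` is a complex-linear isometry preserving orthogonality. -/
theorem exists_boundedRealLinear_compose_complexLinear
    {H K : Type*} [NormedAddCommGroup H] [InnerProductSpace ℂ H] [CompleteSpace H]
    [NormedAddCommGroup K] [InnerProductSpace ℂ K] [CompleteSpace K]
    (hdim : 2 ≤ Module.rank ℂ H)
    (T : H → K)
    (hadd : ∀ x y, T (x + y) = T x + T y)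
    (hsmul : ∀ (r : ℝ) (x : H), T (r • x) = r • T x)
    (hiso : ∀ x, ‖T x‖ = ‖x‖)
    (hop : ∀ x y : H, ⟪x, y⟫ = 0 → ⟪T x, T y⟫ = 0) :
    ∃ R : K →L[ℝ] K,
      (∀ x y : H, R (T (x + y)) = R (T x) + R (T y)) ∧
      (∀ (l : ℂ) (x : H), R (T (l • x)) = l • R (T x)) ∧
      (∀ x : H, ‖R (T x)‖ = ‖x‖) ∧
      (∀ x y : H, ⟪x, y⟫ = 0 → ⟪R (T x), R (T y)⟫ = 0) :=
  exists_boundedRealLinear_compose_complexLinear_general T hadd hsmul hiso hop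
end

section
/- Let H and K be complex inner product spaces with dim(H) ≥ 2, and let A : H → K be a non-zero mapping with norm-dense image. Then the following statements are equivalent: (a) A is complex-linear or conjugate-linear and there exists γ > 0 with ‖A(x)‖ = γ‖x‖ for all x ∈ H (i.e., A is a positive scalar multiple of a complex-linear or a conjugate-linear isometry); (b) there exists γ₁ > 0 such that either ⟪A(x), A(y)⟫ = γ₁⟪x,y⟫ for all x, y ∈ H, or ⟪A(x), A(y)⟫ = γ₁⟪y,x⟫ for all x, y ∈ H; (c) A is complex-linear or conjugate-linear and preserves orthogonality in both directions; (d) A is complex-linear or conjugate-linear and preserves orthogonality; (e) A is additive and preserves orthogonality in both directions; (f) A is additive and preserves orthogonality. -/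
open scoped ComplexInnerProductSpace

/-!
Let `A` be additive and orthogonality preserving. If `x ⊥ y` and `‖x‖ = ‖y‖`, then
`a • x + y ⊥ c • x - (conj a * c) • y`, whence `⟪A (a • x), A (c • x)⟫ = φ (conj a * c)` with
`φ w = ⟪A y, A (w • y)⟫`. As `dim H ≥ 2`, splitting a vector along a unit vector `e` and `eᗮ`
gives `⟪A x, A y⟫ = φ ⟪x, y⟫` for a single additive `φ : ℂ → ℂ`. Cauchy–Schwarz bounds `φ` on
the unit disc, so `φ` is `ℝ`-linear, and it commutes with conjugation:
`φ z = γ re z + δ im z I`. Finally `γ I • A x - δ • A (I • x)` is orthogonal over `ℝ` to the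
range of `A`, hence vanishes by density, and this forces `δ = ± γ`.
-/

section

open Complex ComplexConjugate

variable {H K : Type*} [NormedAddCommGroup H] [InnerProductSpace ℂ H]
  [NormedAddCommGroup K] [InnerProductSpace ℂ K]

theorem exists_norm_eq_one_inner_eq_zero (hdim : 2 ≤ Module.rank ℂ H) (x : H) :
    ∃ y : H, ‖y‖ = 1 ∧ ⟪x, y⟫ = 0 := by
  have hspan : (ℂ ∙ x) ≠ ⊤ := by
    intro htop
    have h := rank_span_le (R := ℂ) ({x} : Set H)
    rw [htop, rank_top, Cardinal.mk_singleton] at h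
    exact absurd (hdim.trans h) (by norm_num)
  obtain ⟨v, hv, hv0⟩ :=
    (Submodule.ne_bot_iff _).mp (Submodule.orthogonal_eq_bot_iff.not.mpr hspan)
  refine ⟨(‖v‖ : ℂ)⁻¹ • v, norm_smul_inv_norm hv0, ?_⟩
  rw [inner_smul_right, Submodule.mem_orthogonal_singleton_iff_inner_right.mp hv, mul_zero]

theorem eq_of_inner_eq {p q : K} (h₁ : ⟪p, p⟫ = ⟪q, p⟫) (h₂ : ⟪p, q⟫ = ⟪q, q⟫) : p = q := by
  rw [← sub_eq_zero, ← inner_self_eq_zero (𝕜 := ℂ), inner_sub_left, inner_sub_right,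
    inner_sub_right, h₁, h₂, sub_self]

theorem DenseRange.eq_zero_of_forall_re_inner_eq_zero {α : Type*} {A : α → K}
    (hdense : DenseRange A) {w : K} (h : ∀ u, re ⟪A u, w⟫ = 0) : w = 0 := by
  have hw : re ⟪w, w⟫ = 0 :=
    hdense.induction_on (p := fun y => re ⟪y, w⟫ = 0) w
      (isClosed_eq (by fun_prop) continuous_const) h
  rwa [← RCLike.re_to_complex, inner_self_eq_norm_sq (𝕜 := ℂ), sq_eq_zero_iff, norm_eq_zero] at hw

def ScalesInner (A : H → K) : Prop :=
  ∃ γ : ℝ, 0 < γ ∧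
    ((∀ x y, ⟪A x, A y⟫ = (γ : ℂ) * ⟪x, y⟫) ∨ (∀ x y, ⟪A x, A y⟫ = (γ : ℂ) * ⟪y, x⟫))

def IsLinearOrConjLinear (A : H → K) : Prop :=
  (∀ x y, A (x + y) = A x + A y) ∧
    ((∀ (l : ℂ) (x : H), A (l • x) = l • A x) ∨ (∀ (l : ℂ) (x : H), A (l • x) = conj l • A x))

section

variable {A : H → K}

theorem re_inner_map_map_of_norm_map (hadd : ∀ x y, A (x + y) = A x + A y) {γ : ℝ}
    (hnorm : ∀ x, ‖A x‖ = γ * ‖x‖) (x y : H) : ⟪A x, A y⟫.re = γ ^ 2 * ⟪x, y⟫.re := by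
  have hA := re_inner_eq_norm_add_mul_self_sub_norm_mul_self_sub_norm_mul_self_div_two
    (𝕜 := ℂ) (A x) (A y)
  have hH := re_inner_eq_norm_add_mul_self_sub_norm_mul_self_sub_norm_mul_self_div_two
    (𝕜 := ℂ) x y
  simp only [RCLike.re_to_complex, ← hadd, hnorm] at hA hH
  rw [hA, hH]
  ring

theorem IsLinearOrConjLinear.scalesInner (h : IsLinearOrConjLinear A) {γ : ℝ} (hγ : 0 < γ)
    (hnorm : ∀ x, ‖A x‖ = γ * ‖x‖) : ScalesInner A := by
  obtain ⟨hadd, hlin | hconj⟩ := h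
  all_goals
    have hre := re_inner_map_map_of_norm_map hadd hnorm
    refine ⟨γ ^ 2, by positivity, ?_⟩
  · refine Or.inl fun x y => Complex.ext (by simpa [← ofReal_pow] using hre x y) ?_
    -- `re ⟪I • u, v⟫ = im ⟪u, v⟫`
    have := hre (I • x) y
    rw [hlin] at this
    simpa [inner_smul_left, ← ofReal_pow] using this
  · refine Or.inr fun x y => ?_
    rw [← inner_conj_symm y x]
    refine Complex.ext (by simpa [← ofReal_pow, -inner_conj_symm] using hre x y) ?_
    have := hre (-I • x) y
    rw [hconj] at this
    simpa [inner_smul_left, ← ofReal_pow, -inner_conj_symm] using this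

theorem ScalesInner.isLinearOrConjLinear (h : ScalesInner A) : IsLinearOrConjLinear A := by
  obtain ⟨γ, -, hlin | hconj⟩ := h
  · refine ⟨fun x y => eq_of_inner_eq ?_ ?_, Or.inl fun l x => eq_of_inner_eq ?_ ?_⟩ <;>
      simp only [inner_add_left, inner_add_right, inner_smul_left, inner_smul_right, hlin] <;> ring
  · refine ⟨fun x y => eq_of_inner_eq ?_ ?_, Or.inr fun l x => eq_of_inner_eq ?_ ?_⟩ <;>
      simp only [inner_add_left, inner_add_right, inner_smul_left, inner_smul_right, hconj,
        conj_conj] <;> ring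

theorem ScalesInner.exists_norm_map (h : ScalesInner A) :
    ∃ γ : ℝ, 0 < γ ∧ ∀ x, ‖A x‖ = γ * ‖x‖ := by
  obtain ⟨γ, hγ, hA⟩ := h
  have hself : ∀ x, ⟪A x, A x⟫ = γ * ⟪x, x⟫ := by rcases hA with hA | hA <;> exact fun x => hA x x
  refine ⟨√γ, Real.sqrt_pos.mpr hγ, fun x => ?_⟩
  have hsq : ‖A x‖ ^ 2 = γ * ‖x‖ ^ 2 := by simpa [← ofReal_pow] using congrArg re (hself x)
  rw [← Real.sqrt_sq (norm_nonneg (A x)), hsq, Real.sqrt_mul hγ.le, Real.sqrt_sq (norm_nonneg x)]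

theorem ScalesInner.inner_eq_zero_iff (h : ScalesInner A) (x y : H) :
    ⟪x, y⟫ = 0 ↔ ⟪A x, A y⟫ = 0 := by
  obtain ⟨γ, hγ, hA | hA⟩ := h <;>
    rw [hA, mul_eq_zero, or_iff_right (ofReal_ne_zero.mpr hγ.ne')]
  exact inner_eq_zero_symm

end

noncomputable def innerAlong (A : H →+ K) (y : H) : ℂ →+ ℂ where
  toFun w := ⟪A y, A (w • y)⟫
  map_zero' := by simp
  map_add' a b := by simp [add_smul]

section

variable (A : H →+ K)

theorem inner_map_smul_map_smul_eq_innerAlong (hA : ∀ x y, ⟪x, y⟫ = 0 → ⟪A x, A y⟫ = 0)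
    {x y : H} (hxy : ⟪x, y⟫ = 0) (hnorm : ‖x‖ = ‖y‖) (a c : ℂ) :
    ⟪A (a • x), A (c • x)⟫ = innerAlong A y (conj a * c) := by
  have hyx : ⟪y, x⟫ = 0 := inner_eq_zero_symm.mp hxy
  have hsq : ⟪x, x⟫ = ⟪y, y⟫ := by simp only [inner_self_eq_norm_sq_to_K, hnorm]
  have horth := hA (a • x + y) (c • x - (conj a * c) • y) (by
    simp only [inner_add_left, inner_sub_right, inner_smul_left, inner_smul_right, hxy, hyx, hsq]
    ring)
  have hcross₁ : ⟪A (a • x), A ((conj a * c) • y)⟫ = 0 := hA _ _ (by simp [hxy])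
  have hcross₂ : ⟪A y, A (c • x)⟫ = 0 := hA _ _ (by simp [hyx])
  simp only [map_add, map_sub, inner_add_left, inner_sub_right, hcross₁, hcross₂] at horth
  simp only [innerAlong, AddMonoidHom.coe_mk, ZeroHom.coe_mk]
  linear_combination horth

theorem inner_map_smul_map_eq_innerAlong (hA : ∀ x y, ⟪x, y⟫ = 0 → ⟪A x, A y⟫ = 0)
    {u y : H} (hu : ‖u‖ = 1) (hy : ‖y‖ = 1) (huy : ⟪u, y⟫ = 0) (a : ℂ) (v : H) :
    ⟪A (a • u), A v⟫ = innerAlong A y ⟪a • u, v⟫ := by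
  have hperp : ⟪A (a • u), A (v - ⟪u, v⟫ • u)⟫ = 0 := hA _ _ (by simp [hu])
  rw [map_sub, inner_sub_right, sub_eq_zero] at hperp
  rw [hperp, inner_map_smul_map_smul_eq_innerAlong A hA huy (hu.trans hy.symm), inner_smul_left]

theorem inner_map_map_eq_innerAlong (hA : ∀ x y, ⟪x, y⟫ = 0 → ⟪A x, A y⟫ = 0)
    {u y : H} (hy : ‖y‖ = 1) (huy : ⟪u, y⟫ = 0) (v : H) :
    ⟪A u, A v⟫ = innerAlong A y ⟪u, v⟫ := by
  rcases eq_or_ne u 0 with rfl | hu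
  · simp
  have h := inner_map_smul_map_eq_innerAlong A hA (norm_smul_inv_norm hu) hy
    (by rw [inner_smul_left, huy, mul_zero]) (‖u‖ : ℂ) v
  simpa [smul_smul, hu] using h

theorem innerAlong_eq_of_orthonormal (hA : ∀ x y, ⟪x, y⟫ = 0 → ⟪A x, A y⟫ = 0)
    {e f : H} (he : ‖e‖ = 1) (hf : ‖f‖ = 1) (hef : ⟪e, f⟫ = 0) :
    innerAlong A f = innerAlong A e := by
  ext w
  rw [innerAlong, AddMonoidHom.coe_mk, ZeroHom.coe_mk,
    inner_map_map_eq_innerAlong A hA he (inner_eq_zero_symm.mp hef), inner_smul_right,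
    inner_self_eq_one_of_norm_eq_one hf, mul_one]

theorem exists_inner_map_map_eq (hdim : 2 ≤ Module.rank ℂ H)
    (hA : ∀ x y, ⟪x, y⟫ = 0 → ⟪A x, A y⟫ = 0) :
    ∃ φ : ℂ →+ ℂ, ∀ x y, ⟪A x, A y⟫ = φ ⟪x, y⟫ := by
  obtain ⟨f, hf, -⟩ := exists_norm_eq_one_inner_eq_zero hdim 0
  obtain ⟨e, he, hfe⟩ := exists_norm_eq_one_inner_eq_zero hdim f
  refine ⟨innerAlong A e, fun x y => ?_⟩
  have hf' : ⟪⟪e, x⟫ • e, f⟫ = 0 := by rw [inner_smul_left, inner_eq_zero_symm.mp hfe, mul_zero]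
  have he' : ⟪x - ⟪e, x⟫ • e, e⟫ = 0 := by
    rw [inner_sub_left, inner_smul_left, inner_self_eq_one_of_norm_eq_one he, mul_one,
      inner_conj_symm, sub_self]
  rw [← add_sub_cancel (⟪e, x⟫ • e) x, map_add, inner_add_left, inner_add_left,
    inner_map_map_eq_innerAlong A hA hf hf', innerAlong_eq_of_orthonormal A hA he hf
      (inner_eq_zero_symm.mp hfe), inner_map_map_eq_innerAlong A hA he he', map_add]

end

section

variable {A : H → K} {φ : ℂ →+ ℂ} {e : H}

theorem apply_eq_inner_map_smul (hφ : ∀ x y, ⟪A x, A y⟫ = φ ⟪x, y⟫) (he : ‖e‖ = 1) (w : ℂ) :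
    φ w = ⟪A e, A (w • e)⟫ := by
  rw [hφ, inner_smul_right, inner_self_eq_one_of_norm_eq_one he, mul_one]

theorem map_conj_of_inner_map_map (hφ : ∀ x y, ⟪A x, A y⟫ = φ ⟪x, y⟫) (he : ‖e‖ = 1) (w : ℂ) :
    φ (conj w) = conj (φ w) := by
  rw [apply_eq_inner_map_smul hφ he w, inner_conj_symm, hφ, inner_smul_left,
    inner_self_eq_one_of_norm_eq_one he, mul_one]

theorem norm_map_le_norm_map (hφ : ∀ x y, ⟪A x, A y⟫ = φ ⟪x, y⟫) (he : ‖e‖ = 1) {u v : H}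
    (huv : ‖u‖ ≤ ‖v‖) : ‖A u‖ ≤ ‖A v‖ := by
  set w : H := (√(‖v‖ ^ 2 - ‖u‖ ^ 2) : ℂ) • e
  have hw : ‖v‖ ^ 2 = ‖u‖ ^ 2 + ‖w‖ ^ 2 := by
    rw [norm_smul, he, mul_one, norm_real, Real.norm_eq_abs, sq_abs,
      Real.sq_sqrt (by nlinarith [norm_nonneg u])]
    ring
  have hinner : ⟪A v, A v⟫ = ⟪A u, A u⟫ + ⟪A w, A w⟫ := by
    simp only [hφ, ← map_add, inner_self_eq_norm_sq_to_K]
    exact_mod_cast congrArg φ (congrArg ofReal hw)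
  have h : ‖A v‖ ^ 2 = ‖A u‖ ^ 2 + ‖A w‖ ^ 2 := by
    simpa only [map_add, inner_self_eq_norm_sq] using congrArg RCLike.re hinner
  exact (pow_le_pow_iff_left₀ (norm_nonneg _) (norm_nonneg _) two_ne_zero).mp
    (by nlinarith [norm_nonneg (A w)])

theorem norm_apply_le_of_norm_le_one (hφ : ∀ x y, ⟪A x, A y⟫ = φ ⟪x, y⟫) (he : ‖e‖ = 1) {w : ℂ}
    (hw : ‖w‖ ≤ 1) : ‖φ w‖ ≤ ‖A e‖ ^ 2 :=
  calc ‖φ w‖ = ‖⟪A e, A (w • e)⟫‖ := by rw [apply_eq_inner_map_smul hφ he]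
    _ ≤ ‖A e‖ * ‖A (w • e)‖ := norm_inner_le_norm _ _
    _ ≤ ‖A e‖ * ‖A e‖ := by
      gcongr
      exact norm_map_le_norm_map hφ he (by rwa [norm_smul, he, mul_one])
    _ = ‖A e‖ ^ 2 := (sq _).symm

theorem continuous_of_inner_map_map (hφ : ∀ x y, ⟪A x, A y⟫ = φ ⟪x, y⟫) (he : ‖e‖ = 1) :
    Continuous φ := by
  refine φ.continuous_of_isBounded_nhds_zero (Metric.closedBall_mem_nhds 0 one_pos)
    ((Metric.isBounded_closedBall (x := 0) (r := ‖A e‖ ^ 2)).subset ?_)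
  rintro _ ⟨w, hw, rfl⟩
  simpa using norm_apply_le_of_norm_le_one hφ he (by simpa using hw)

theorem exists_apply_eq_re_add_im (hφ : ∀ x y, ⟪A x, A y⟫ = φ ⟪x, y⟫) (he : ‖e‖ = 1) :
    ∃ γ δ : ℝ, ∀ z, φ z = γ * z.re + δ * z.im * I := by
  have hconj := map_conj_of_inner_map_map hφ he
  refine ⟨(φ 1).re, (φ I).im, fun z => ?_⟩
  have h1 : ((φ 1).re : ℂ) = φ 1 := conj_eq_iff_re.mp (by rw [← hconj, map_one])
  have hI : ((φ I).im : ℂ) * I = φ I := by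
    have h := congrArg re (hconj I)
    rw [conj_I, map_neg, neg_re, conj_re] at h
    apply Complex.ext <;> simp [show (φ I).re = 0 by linarith]
  have hreal := map_real_smul φ (continuous_of_inner_map_map hφ he)
  calc φ z = φ (z.re • 1 + z.im • I) := by rw [real_smul, real_smul, mul_one, re_add_im]
    _ = z.re * φ 1 + z.im * φ I := by rw [map_add, hreal, hreal, real_smul, real_smul]
    _ = _ := by linear_combination -(z.re : ℂ) * h1 - (z.im : ℂ) * hI

end

section

variable {A : H → K} {γ δ : ℝ}

theorem sq_eq_sq_of_denseRange (hdense : DenseRange A)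
    (h : ∀ x y, ⟪A x, A y⟫ = γ * ⟪x, y⟫.re + δ * ⟪x, y⟫.im * I) {x : H} (hx : x ≠ 0) :
    γ ^ 2 = δ ^ 2 := by
  have hW : (γ * I : ℂ) • A x - (δ : ℂ) • A (I • x) = 0 := by
    refine hdense.eq_zero_of_forall_re_inner_eq_zero fun u => ?_
    simp only [inner_sub_right, inner_smul_right, h, sub_re, mul_re, add_re, mul_im, add_im,
      I_re, I_im, ofReal_re, ofReal_im]
    ring
  have := congrArg (fun w => im ⟪A x, w⟫) hW
  simp only [inner_sub_right, inner_smul_right, h, inner_zero_right] at this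
  simp only [inner_self_eq_norm_sq_to_K, coe_algebraMap, ← ofReal_pow, sub_im, mul_re, mul_im,
    add_re, add_im, I_re, I_im, ofReal_re, ofReal_im, zero_im] at this
  exact mul_right_cancel₀ (by positivity : ‖x‖ ^ 2 ≠ 0) (by linear_combination this)

theorem pos_of_inner_map_map (hA₀ : A ≠ 0)
    (h : ∀ x y, ⟪A x, A y⟫ = γ * ⟪x, y⟫.re + δ * ⟪x, y⟫.im * I) : 0 < γ := by
  obtain ⟨x, hx⟩ := Function.ne_iff.mp hA₀
  have hnorm : ‖A x‖ ^ 2 = γ * ‖x‖ ^ 2 := by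
    simpa [← ofReal_pow] using congrArg re (h x x)
  exact pos_of_mul_pos_left (hnorm ▸ pow_pos (norm_pos_iff.mpr hx) 2) (sq_nonneg _)

theorem scalesInner_of_inner_map_map_eq (hdense : DenseRange A) (hA₀ : A ≠ 0)
    (h : ∀ x y, ⟪A x, A y⟫ = γ * ⟪x, y⟫.re + δ * ⟪x, y⟫.im * I) {x₀ : H} (hx₀ : x₀ ≠ 0) :
    ScalesInner A := by
  refine ⟨γ, pos_of_inner_map_map hA₀ h, ?_⟩
  rcases sq_eq_sq_iff_eq_or_eq_neg.mp (sq_eq_sq_of_denseRange hdense h hx₀).symm with hδ | hδ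
  · refine Or.inl fun x y => ?_
    rw [h, hδ]
    apply Complex.ext <;> simp
  · refine Or.inr fun x y => ?_
    rw [h, hδ, ← inner_conj_symm y x]
    apply Complex.ext <;> simp [-inner_conj_symm]

end

theorem scalesInner_of_preservesOrthogonality (hdim : 2 ≤ Module.rank ℂ H) (A : H →+ K)
    (hA₀ : ⇑A ≠ 0) (hdense : DenseRange A) (hA : ∀ x y, ⟪x, y⟫ = 0 → ⟪A x, A y⟫ = 0) :
    ScalesInner A := by
  obtain ⟨φ, hφ⟩ := exists_inner_map_map_eq A hdim hA
  obtain ⟨e, he, -⟩ := exists_norm_eq_one_inner_eq_zero hdim 0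
  obtain ⟨γ, δ, hγδ⟩ := exists_apply_eq_re_add_im hφ he
  exact scalesInner_of_inner_map_map_eq hdense hA₀ (fun x y => by rw [hφ, hγδ])
    (x₀ := e) (by rintro rfl; simp at he)

end

/-- Theorem 2.1 of Li–Liu–Peralta: for a non-zero map `A : H → K` with norm-dense
image between complex inner product spaces (`dim H ≥ 2`), the statements
(a) `A` is a positive scalar multiple of a complex-linear or conjugate-linear
isometry; (b) `⟪A x, A y⟫ = γ₁ ⟪x, y⟫` for all `x, y` or `⟪A x, A y⟫ = γ₁ ⟪y, x⟫`
for all `x, y`, for some `γ₁ > 0`; (c) `A` is complex-linear or conjugate-linear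
and preserves orthogonality in both directions; (d) `A` is complex-linear or
conjugate-linear and preserves orthogonality; (e) `A` is additive and preserves
orthogonality in both directions; (f) `A` is additive and preserves orthogonality —
are all equivalent. -/
theorem denseRange_characterization_op
    {H K : Type*} [NormedAddCommGroup H] [InnerProductSpace ℂ H]
    [NormedAddCommGroup K] [InnerProductSpace ℂ K]
    (hdim : 2 ≤ Module.rank ℂ H)
    (A : H → K) (hA : A ≠ 0) (hdense : DenseRange A) :
    -- (a) ↔ (b)
    ((((∀ x y, A (x + y) = A x + A y) ∧
        ((∀ (l : ℂ) (x : H), A (l • x) = l • A x) ∨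
          (∀ (l : ℂ) (x : H), A (l • x) = (starRingEnd ℂ l) • A x))) ∧
       ∃ γ : ℝ, 0 < γ ∧ ∀ x, ‖A x‖ = γ * ‖x‖) ↔
      (∃ γ₁ : ℝ, 0 < γ₁ ∧
        ((∀ x y : H, ⟪A x, A y⟫ = (γ₁ : ℂ) * ⟪x, y⟫) ∨
         (∀ x y : H, ⟪A x, A y⟫ = (γ₁ : ℂ) * ⟪y, x⟫)))) ∧
    -- (b) ↔ (c)
    ((∃ γ₁ : ℝ, 0 < γ₁ ∧
        ((∀ x y : H, ⟪A x, A y⟫ = (γ₁ : ℂ) * ⟪x, y⟫) ∨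
         (∀ x y : H, ⟪A x, A y⟫ = (γ₁ : ℂ) * ⟪y, x⟫))) ↔
      (((∀ x y, A (x + y) = A x + A y) ∧
        ((∀ (l : ℂ) (x : H), A (l • x) = l • A x) ∨
          (∀ (l : ℂ) (x : H), A (l • x) = (starRingEnd ℂ l) • A x))) ∧
       ∀ x y : H, ⟪x, y⟫ = 0 ↔ ⟪A x, A y⟫ = 0)) ∧
    -- (c) ↔ (d)
    ((((∀ x y, A (x + y) = A x + A y) ∧
        ((∀ (l : ℂ) (x : H), A (l • x) = l • A x) ∨
          (∀ (l : ℂ) (x : H), A (l • x) = (starRingEnd ℂ l) • A x))) ∧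
       ∀ x y : H, ⟪x, y⟫ = 0 ↔ ⟪A x, A y⟫ = 0) ↔
      (((∀ x y, A (x + y) = A x + A y) ∧
        ((∀ (l : ℂ) (x : H), A (l • x) = l • A x) ∨
          (∀ (l : ℂ) (x : H), A (l • x) = (starRingEnd ℂ l) • A x))) ∧
       ∀ x y : H, ⟪x, y⟫ = 0 → ⟪A x, A y⟫ = 0)) ∧
    -- (d) ↔ (e)
    ((((∀ x y, A (x + y) = A x + A y) ∧
        ((∀ (l : ℂ) (x : H), A (l • x) = l • A x) ∨
          (∀ (l : ℂ) (x : H), A (l • x) = (starRingEnd ℂ l) • A x))) ∧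
       ∀ x y : H, ⟪x, y⟫ = 0 → ⟪A x, A y⟫ = 0) ↔
      ((∀ x y, A (x + y) = A x + A y) ∧
       ∀ x y : H, ⟪x, y⟫ = 0 ↔ ⟪A x, A y⟫ = 0)) ∧
    -- (e) ↔ (f)
    (((∀ x y, A (x + y) = A x + A y) ∧
       ∀ x y : H, ⟪x, y⟫ = 0 ↔ ⟪A x, A y⟫ = 0) ↔
      ((∀ x y, A (x + y) = A x + A y) ∧
       ∀ x y : H, ⟪x, y⟫ = 0 → ⟪A x, A y⟫ = 0)) := by
  have hop : (∀ x y, A (x + y) = A x + A y) →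
      (∀ x y : H, ⟪x, y⟫ = 0 → ⟪A x, A y⟫ = 0) → ScalesInner A := fun hadd =>
    scalesInner_of_preservesOrthogonality hdim (AddMonoidHom.mk' A hadd) hA hdense
  have ha : (IsLinearOrConjLinear A ∧ ∃ γ : ℝ, 0 < γ ∧ ∀ x, ‖A x‖ = γ * ‖x‖) ↔ ScalesInner A :=
    ⟨fun ⟨hl, _, hγ, hn⟩ => hl.scalesInner hγ hn,
      fun hb => ⟨hb.isLinearOrConjLinear, hb.exists_norm_map⟩⟩
  have hc : (IsLinearOrConjLinear A ∧ ∀ x y : H, ⟪x, y⟫ = 0 ↔ ⟪A x, A y⟫ = 0) ↔ ScalesInner A :=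
    ⟨fun ⟨hl, h⟩ => hop hl.1 fun x y => (h x y).1,
      fun hb => ⟨hb.isLinearOrConjLinear, hb.inner_eq_zero_iff⟩⟩
  have hd : (IsLinearOrConjLinear A ∧ ∀ x y : H, ⟪x, y⟫ = 0 → ⟪A x, A y⟫ = 0) ↔ ScalesInner A :=
    ⟨fun ⟨hl, h⟩ => hop hl.1 h,
      fun hb => ⟨hb.isLinearOrConjLinear, fun x y => (hb.inner_eq_zero_iff x y).1⟩⟩
  have he : ((∀ x y, A (x + y) = A x + A y) ∧ ∀ x y : H, ⟪x, y⟫ = 0 ↔ ⟪A x, A y⟫ = 0) ↔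
      ScalesInner A :=
    ⟨fun ⟨hadd, h⟩ => hop hadd fun x y => (h x y).1,
      fun hb => ⟨hb.isLinearOrConjLinear.1, hb.inner_eq_zero_iff⟩⟩
  have hf : ((∀ x y, A (x + y) = A x + A y) ∧ ∀ x y : H, ⟪x, y⟫ = 0 → ⟪A x, A y⟫ = 0) ↔
      ScalesInner A :=
    ⟨fun ⟨hadd, h⟩ => hop hadd h,
      fun hb => ⟨hb.isLinearOrConjLinear.1, fun x y => (hb.inner_eq_zero_iff x y).1⟩⟩
  exact ⟨ha, hc.symm, hc.trans hd.symm, hd.trans he.symm, he.trans hf.symm⟩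
end
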